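/- arXiv:2209.09537 — 2 statements merged into one kernel-verified Lean document; each statement's English description precedes it below -/
import Mathlib

section
/- Let p > 3 and define f(σ) = (p−3)²(σ^{p−1} − 2σ^{p−1} log σ) − 4(p−3) log σ − 4 − (p²−6p+5)σ^{p−3} for σ ∈ (0,1]. Then f is decreasing on (0,1], f(1) = 0, and lim_{σ→0⁺} f(σ) = +∞; in particular f(σ) ≥ 0 for all σ ∈ (0,1]. -/
open Real Set Filter Topology

private lemma key_ineq (q L a b : ℝ) (hq : 0 < q) (hL : 0 < L)
    (ha : a = Real.exp (-(q + 2) * L)) (hb : b = Real.exp (-q * L)) :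
    q ^ 2 * a + 2 * q * (q + 2) * L * a - (q ^ 2 - 4) * b - 4 < 0 := by
  have hqL : (0:ℝ) < q * L := mul_pos hq hL
  have ha0 : 0 < a := ha ▸ Real.exp_pos _
  have hb0 : 0 < b := hb ▸ Real.exp_pos _
  have hab : a < b := by
    rw [ha, hb]
    exact Real.exp_lt_exp.2 (by nlinarith)
  -- (q*L+1)*b < 1
  have hb1 : (q * L + 1) * b < 1 := by
    have h := Real.add_one_lt_exp (x := q * L) (ne_of_gt hqL)
    have h2 : (q * L + 1) * Real.exp (-(q * L)) < Real.exp (q * L) * Real.exp (-(q * L)) :=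
      mul_lt_mul_of_pos_right h (Real.exp_pos _)
    rw [← Real.exp_add, add_neg_cancel, Real.exp_zero] at h2
    rw [hb, neg_mul]
    exact h2
  -- (2*L+1)*a < b
  have ha1 : (2 * L + 1) * a < b := by
    have h := Real.add_one_lt_exp (x := 2 * L) (by linarith : (0:ℝ) < 2 * L).ne'
    have h2 : (2 * L + 1) * Real.exp (-(q + 2) * L) <
        Real.exp (2 * L) * Real.exp (-(q + 2) * L) :=
      mul_lt_mul_of_pos_right h (Real.exp_pos _)
    rw [← Real.exp_add, show 2 * L + -(q + 2) * L = -q * L by ring] at h2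
    rw [ha, hb]
    exact h2
  have t1 : q ^ 2 * ((2 * L + 1) * a) ≤ q ^ 2 * b :=
    mul_le_mul_of_nonneg_left ha1.le (sq_nonneg q)
  have t2 : q * L * a ≤ q * L * b := mul_le_mul_of_nonneg_left hab.le hqL.le
  nlinarith [t1, t2, hb1]

theorem f_decreasing_nonneg (p : ℝ) (hp : 3 < p)
    (f : ℝ → ℝ)
    (hf : ∀ σ, f σ = (p - 3) ^ 2 * (σ ^ (p - 1) - 2 * σ ^ (p - 1) * Real.log σ)
      - 4 * (p - 3) * Real.log σ - 4 - (p ^ 2 - 6 * p + 5) * σ ^ (p - 3)) :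
    StrictAntiOn f (Ioc (0 : ℝ) 1) ∧ f 1 = 0 ∧
      Tendsto f (nhdsWithin 0 (Ioi (0 : ℝ))) atTop ∧
      ∀ σ ∈ Ioc (0 : ℝ) 1, 0 ≤ f σ := by
  have hfun : f = fun σ : ℝ => (p - 3) ^ 2 * σ ^ (p - 1)
      - 2 * (p - 3) ^ 2 * (σ ^ (p - 1) * Real.log σ)
      - 4 * (p - 3) * Real.log σ - (p ^ 2 - 6 * p + 5) * σ ^ (p - 3) - 4 := by
    funext σ; rw [hf]; ring
  -- derivative
  have hderiv : ∀ x : ℝ, 0 < x → HasDerivAt f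
      ((p - 3) ^ 2 * ((p - 1) * x ^ (p - 1 - 1))
        - 2 * (p - 3) ^ 2 * ((p - 1) * x ^ (p - 1 - 1) * Real.log x + x ^ (p - 1) * x⁻¹)
        - 4 * (p - 3) * x⁻¹ - (p ^ 2 - 6 * p + 5) * ((p - 3) * x ^ (p - 3 - 1))) x := by
    intro x hx
    rw [hfun]
    have h1 : HasDerivAt (fun σ : ℝ => σ ^ (p - 1)) ((p - 1) * x ^ (p - 1 - 1)) x :=
      Real.hasDerivAt_rpow_const (Or.inl hx.ne')
    have h3 : HasDerivAt (fun σ : ℝ => σ ^ (p - 3)) ((p - 3) * x ^ (p - 3 - 1)) x :=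
      Real.hasDerivAt_rpow_const (Or.inl hx.ne')
    have hlog : HasDerivAt Real.log x⁻¹ x := Real.hasDerivAt_log hx.ne'
    exact ((((h1.const_mul ((p - 3) ^ 2)).sub
      ((h1.mul hlog).const_mul (2 * (p - 3) ^ 2))).sub
      (hlog.const_mul (4 * (p - 3)))).sub
      (h3.const_mul (p ^ 2 - 6 * p + 5))).sub_const 4
  -- negativity of derivative on (0,1)
  have hneg : ∀ x ∈ Ioo (0:ℝ) 1,
      (p - 3) ^ 2 * ((p - 1) * x ^ (p - 1 - 1))
        - 2 * (p - 3) ^ 2 * ((p - 1) * x ^ (p - 1 - 1) * Real.log x + x ^ (p - 1) * x⁻¹)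
        - 4 * (p - 3) * x⁻¹ - (p ^ 2 - 6 * p + 5) * ((p - 3) * x ^ (p - 3 - 1)) < 0 := by
    intro x hx
    obtain ⟨hx0, hx1⟩ := hx
    have hl : Real.log x < 0 := Real.log_neg hx0 hx1
    have e1 : x ^ (p - 1 - 1) = Real.exp (-Real.log x) * Real.exp ((p - 1) * Real.log x) := by
      rw [Real.rpow_def_of_pos hx0, ← Real.exp_add]; congr 1; ring
    have e2 : x ^ (p - 3 - 1) = Real.exp (-Real.log x) * Real.exp ((p - 3) * Real.log x) := by
      rw [Real.rpow_def_of_pos hx0, ← Real.exp_add]; congr 1; ring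
    have e3 : x ^ (p - 1) = Real.exp ((p - 1) * Real.log x) := by
      rw [Real.rpow_def_of_pos hx0]; congr 1; ring
    have e4 : x⁻¹ = Real.exp (-Real.log x) := by
      rw [Real.exp_neg, Real.exp_log hx0]
    have hG := key_ineq (p - 3) (-Real.log x)
      (Real.exp ((p - 1) * Real.log x)) (Real.exp ((p - 3) * Real.log x))
      (by linarith) (by linarith)
      (by congr 1; ring) (by congr 1; ring)
    have hfac : (0:ℝ) < (p - 3) * Real.exp (-Real.log x) :=
      mul_pos (by linarith) (Real.exp_pos _)
    rw [e1, e2, e3, e4]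
    nlinarith [mul_neg_of_pos_of_neg hfac hG]
  have hanti : StrictAntiOn f (Ioc (0:ℝ) 1) := by
    apply strictAntiOn_of_deriv_neg (convex_Ioc 0 1)
    · exact fun x hx => ((hderiv x hx.1).continuousAt).continuousWithinAt
    · intro x hx
      rw [interior_Ioc] at hx
      rw [(hderiv x hx.1).deriv]
      exact hneg x hx
  have hf1 : f 1 = 0 := by
    rw [hf]; simp [Real.one_rpow, Real.log_one]; ring
  refine ⟨hanti, hf1, ?_, ?_⟩
  · -- tendsto atTop
    have hrp1 : Tendsto (fun σ : ℝ => σ ^ (p - 1)) (𝓝[>] 0) (𝓝 0) := by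
      have h := (Real.continuousAt_rpow_const 0 (p - 1) (Or.inr (by linarith))).tendsto
      rw [Real.zero_rpow (by linarith : p - 1 ≠ 0)] at h
      exact h.mono_left nhdsWithin_le_nhds
    have hrp3 : Tendsto (fun σ : ℝ => σ ^ (p - 3)) (𝓝[>] 0) (𝓝 0) := by
      have h := (Real.continuousAt_rpow_const 0 (p - 3) (Or.inr (by linarith))).tendsto
      rw [Real.zero_rpow (by linarith : p - 3 ≠ 0)] at h
      exact h.mono_left nhdsWithin_le_nhds
    have hlr : Tendsto (fun σ : ℝ => Real.log σ * σ ^ (p - 1)) (𝓝[>] 0) (𝓝 0) :=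
      tendsto_log_mul_rpow_nhdsGT_zero (by linarith)
    have hr : Tendsto (fun σ : ℝ => (p - 3) ^ 2 * σ ^ (p - 1)
        - 2 * (p - 3) ^ 2 * (Real.log σ * σ ^ (p - 1))
        - (p ^ 2 - 6 * p + 5) * σ ^ (p - 3) - 4) (𝓝[>] 0)
        (𝓝 ((p - 3) ^ 2 * 0 - 2 * (p - 3) ^ 2 * 0 - (p ^ 2 - 6 * p + 5) * 0 - 4)) :=
      (((hrp1.const_mul _).sub (hlr.const_mul _)).sub (hrp3.const_mul _)).sub_const 4
    have hlt : Tendsto (fun σ : ℝ => -(4 * (p - 3)) * Real.log σ) (𝓝[>] 0) atTop :=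
      (tendsto_const_mul_atTop_of_neg (by linarith)).2 Real.tendsto_log_nhdsGT_zero
    have hev : ∀ᶠ σ in 𝓝[>] (0:ℝ), (p - 3) ^ 2 * σ ^ (p - 1)
        - 2 * (p - 3) ^ 2 * (Real.log σ * σ ^ (p - 1))
        - (p ^ 2 - 6 * p + 5) * σ ^ (p - 3) - 4 ≥ -5 := by
      have := hr.eventually_const_lt (show (-5:ℝ) < (p - 3) ^ 2 * 0 - 2 * (p - 3) ^ 2 * 0
        - (p ^ 2 - 6 * p + 5) * 0 - 4 by norm_num)
      exact this.mono fun x hx => hx.le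
    have := tendsto_atTop_add_right_of_le' (𝓝[>] (0:ℝ)) (-5) hlt hev
    refine this.congr fun σ => ?_
    rw [hf]; ring
  · -- nonnegativity
    intro σ hσ
    rcases eq_or_lt_of_le hσ.2 with h1 | h1
    · rw [h1, hf1]
    · have := hanti hσ (right_mem_Ioc.2 one_pos) h1
      rw [hf1] at this
      exact this.le
end

section
/- For p > 3 and σ ∈ (0,1), the inequality (2(p−1) + (p²−4p+7)σ^{p−3} − 2(p+1)σ^{p−3}) / (2(1 − 2 log σ)) ≤ (2σ^{p−1} − (p−1)σ² + (p−3)) / (2σ² log σ − σ² + 1) holds. -/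
open Real Set

/-- `e^y (1 - y) ≤ 1` for all real `y`. -/
lemma aux_exp1 (y : ℝ) : Real.exp y * (1 - y) ≤ 1 := by
  have h : 1 - y ≤ Real.exp (-y) := by
    have := Real.add_one_le_exp (-y); linarith
  calc Real.exp y * (1 - y) ≤ Real.exp y * Real.exp (-y) := by
        exact mul_le_mul_of_nonneg_left h (Real.exp_pos y).le
    _ = 1 := by rw [← Real.exp_add]; simp

/-- `e^y (1 - y - y²/2) ≤ 1` for all real `y`. -/
lemma aux_exp2 (y : ℝ) : Real.exp y * (1 - y - y ^ 2 / 2) ≤ 1 := by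
  have h1 := aux_exp1 y
  nlinarith [Real.exp_pos y, sq_nonneg y]

/-- `e^y (1 - y²/2) ≤ 1 + y` for `y ≥ 0`. -/
lemma aux_exp3 (y : ℝ) (hy : 0 ≤ y) : Real.exp y * (1 - y ^ 2 / 2) ≤ 1 + y := by
  -- ψ y = 1 + y - e^y (1 - y²/2) is monotone with ψ 0 = 0
  have hmono : Monotone (fun y : ℝ => 1 + y - Real.exp y * (1 - y ^ 2 / 2)) := by
    apply monotone_of_hasDerivAt_nonneg
      (f' := fun y : ℝ => 1 - Real.exp y * (1 - y - y ^ 2 / 2))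
    · intro x
      have h1 : HasDerivAt (fun y : ℝ => Real.exp y * (1 - y ^ 2 / 2))
          (Real.exp x * (1 - x ^ 2 / 2) + Real.exp x * (-x)) x := by
        have ha : HasDerivAt Real.exp (Real.exp x) x := Real.hasDerivAt_exp x
        have hb : HasDerivAt (fun y : ℝ => 1 - y ^ 2 / 2) (-x) x := by
          have : HasDerivAt (fun y : ℝ => y ^ 2) (2 * x) x := by
            simpa using hasDerivAt_pow 2 x
          have := ((hasDerivAt_const x (1:ℝ)).sub (this.div_const 2))
          exact this.congr_deriv (by ring)
        exact ha.mul hb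
      have h2 : HasDerivAt (fun y : ℝ => 1 + y - Real.exp y * (1 - y ^ 2 / 2))
          (1 - (Real.exp x * (1 - x ^ 2 / 2) + Real.exp x * (-x))) x := by
        have hc : HasDerivAt (fun y : ℝ => 1 + y) 1 x := by
          simpa using (hasDerivAt_id x).const_add (1:ℝ)
        exact hc.sub h1
      convert h2 using 1
      ring
    · intro x
      have := aux_exp2 x
      simp only [Pi.zero_apply]
      nlinarith
  have := hmono hy
  simp only [Real.exp_zero] at this
  nlinarith

/-- `2 x² e^{-x} ≤ 4 (x - 1 + e^{-x})` for `x ≥ 0`. -/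
lemma aux_exp4 (x : ℝ) (hx : 0 ≤ x) :
    2 * x ^ 2 * Real.exp (-x) ≤ 4 * (x - 1 + Real.exp (-x)) := by
  have hmono : Monotone (fun x : ℝ =>
      4 * (x - 1 + Real.exp (-x)) - 2 * x ^ 2 * Real.exp (-x)) := by
    apply monotone_of_hasDerivAt_nonneg
      (f' := fun x : ℝ => 4 - Real.exp (-x) * (4 + 4 * x - 2 * x ^ 2))
    · intro x
      have he : HasDerivAt (fun y : ℝ => Real.exp (-y)) (-Real.exp (-x)) x := by
        have := (Real.hasDerivAt_exp (-x)).comp x ((hasDerivAt_id x).neg)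
        exact this.congr_deriv (by simp)
      have h1 : HasDerivAt (fun y : ℝ => 4 * (y - 1 + Real.exp (-y)))
          (4 * (1 + -Real.exp (-x))) x := by
        have : HasDerivAt (fun y : ℝ => y - 1 + Real.exp (-y)) (1 + -Real.exp (-x)) x := by
          exact ((hasDerivAt_id x).sub_const 1).add he
        exact this.const_mul 4
      have h2 : HasDerivAt (fun y : ℝ => 2 * y ^ 2 * Real.exp (-y))
          (2 * (2 * x) * Real.exp (-x) + 2 * x ^ 2 * (-Real.exp (-x))) x := by
        have hp : HasDerivAt (fun y : ℝ => 2 * y ^ 2) (2 * (2 * x)) x := by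
          simpa using (hasDerivAt_pow 2 x).const_mul (2:ℝ)
        exact hp.mul he
      have := h1.sub h2
      exact this.congr_deriv (by ring)
    · intro x
      have h2 := Real.add_one_le_exp x
      have hp := Real.exp_pos (-x)
      have hm : Real.exp (-x) * Real.exp x = 1 := by rw [← Real.exp_add]; simp
      simp only [Pi.zero_apply]
      nlinarith [mul_le_mul_of_nonneg_left h2 hp.le,
        mul_nonneg (sq_nonneg x) hp.le]
  have := hmono hx
  simp only [Real.exp_zero, neg_zero] at this
  nlinarith

/-- Core inequality: for k, t > 0,
`0 ≤ k² e^{-kt} e^{-2t} (1+2t) + 4kt - 4 - (k²-4) e^{-kt}`. -/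
lemma core_ineq (k t : ℝ) (hk : 0 < k) (ht : 0 < t) :
    0 ≤ k ^ 2 * Real.exp (-(k * t)) * Real.exp (-(2 * t)) * (1 + 2 * t)
      + 4 * k * t - 4 - (k ^ 2 - 4) * Real.exp (-(k * t)) := by
  have h3 : 1 - 2 * t ^ 2 ≤ Real.exp (-(2 * t)) * (1 + 2 * t) := by
    have := aux_exp3 (2 * t) (by linarith)
    have hpos := Real.exp_pos (-(2 * t))
    have hm : Real.exp (-(2 * t)) * Real.exp (2 * t) = 1 := by rw [← Real.exp_add]; simp
    nlinarith
  have h4 := aux_exp4 (k * t) (by positivity)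
  have hE := Real.exp_pos (-(k * t))
  nlinarith [mul_le_mul_of_nonneg_left h3 (mul_nonneg (sq_nonneg k) hE.le),
    sq_nonneg (k * t)]

theorem key_instability_inequality (p σ : ℝ) (hp : 3 < p) (hσ : σ ∈ Ioo (0 : ℝ) 1) :
    (2 * (p - 1) + (p ^ 2 - 4 * p + 7) * σ ^ (p - 3) - 2 * (p + 1) * σ ^ (p - 3))
        / (2 * (1 - 2 * Real.log σ))
      ≤ (2 * σ ^ (p - 1) - (p - 1) * σ ^ 2 + (p - 3))
        / (2 * σ ^ 2 * Real.log σ - σ ^ 2 + 1) := by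
  obtain ⟨h0, h1⟩ := hσ
  set L : ℝ := Real.log σ with hL
  have hLneg : L < 0 := Real.log_neg h0 h1
  -- σ = exp L, σ² = exp (2L)
  have hσe : σ = Real.exp L := (Real.exp_log h0).symm
  have hσ2 : σ ^ 2 = Real.exp (2 * L) := by
    rw [hσe, sq, ← Real.exp_add]; ring_nf
  -- rpow to exp
  have hE3 : σ ^ (p - 3) = Real.exp ((p - 3) * L) := by
    rw [Real.rpow_def_of_pos h0, mul_comm]
  have hE1 : σ ^ (p - 1) = Real.exp ((p - 3) * L) * σ ^ 2 := by
    rw [Real.rpow_def_of_pos h0, hσ2, ← Real.exp_add]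
    congr 1
    ring
  -- denominators positive
  have hD1 : 0 < 2 * (1 - 2 * L) := by linarith
  have hD2 : 0 < 2 * σ ^ 2 * L - σ ^ 2 + 1 := by
    have h := Real.add_one_lt_exp (x := -2 * L) (by linarith)
    have hpos := Real.exp_pos (2 * L)
    have hm : Real.exp (2 * L) * Real.exp (-2 * L) = 1 := by rw [← Real.exp_add]; simp
    rw [hσ2]
    nlinarith
  rw [div_le_div_iff₀ hD1 hD2]
  -- core inequality with k = p - 3, t = -L
  have hcore := core_ineq (p - 3) (-L) (by linarith) (by linarith)
  have e1 : Real.exp (-((p - 3) * -L)) = Real.exp ((p - 3) * L) := by ring_nf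
  have e2 : Real.exp (-(2 * -L)) = σ ^ 2 := by rw [hσ2]; ring_nf
  rw [e1, e2] at hcore
  rw [hE3, hE1]
  set E : ℝ := Real.exp ((p - 3) * L) with hE
  nlinarith [hcore, sq_nonneg (p - 3), Real.exp_pos ((p - 3) * L)]
end
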